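/- arXiv:1903.11135 — 2 statements merged into one kernel-verified Lean document; each statement's English description precedes it below -/
import Mathlib

section
/- Let d ≥ 4 and let Γ = {p₀, p₁, …, p_d} be a collection of d + 1 ≥ 5 distinct points in ℙ²(ℂ). If Γ fails to impose independent linear conditions on plane curves of degree d − 2 (i.e., there exists some point p ∈ Γ such that every homogeneous polynomial of degree d − 2 in three variables vanishing at all points of Γ \ {p} also vanishes at p), then at least d of the points of Γ are collinear. -/
/-!
Let `p ∈ Γ` be a point at which `Γ` fails, put `S = Γ \ {p}` (so `#S = d`), and suppose no line
contains `d` points of `Γ`. Then every line through `p` meets `S` in at most `d - 2` points, so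
`S` contains two disjoint pairs `{q₁, q₂}`, `{q₃, q₄}` whose points lie on different lines through
`p`; hence the lines `q₁q₂` and `q₃q₄` miss `p`. Together with one line through each of the
remaining `d - 4` points of `S`, chosen to miss `p`, they form a curve of degree `d - 2` through
`S` but not through `p`.
-/

open MvPolynomial Submodule Finset
open scoped LinearAlgebra.Projectivization

theorem Finset.exists_two_disjoint_pairs_apply_ne {α β : Type*} [DecidableEq α] {f : α → β}
    {S : Finset α} {n : ℕ} (hn : 2 ≤ n) (hS : #S = n + 2)
    (hfiber : ∀ a ∈ S, ∀ T ⊆ S, (∀ b ∈ T, f b = f a) → #T ≤ n) :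
    ∃ q₁ ∈ S, ∃ q₂ ∈ S, ∃ q₃ ∈ S, ∃ q₄ ∈ S, f q₁ ≠ f q₂ ∧ f q₃ ≠ f q₄ ∧
      q₃ ≠ q₁ ∧ q₃ ≠ q₂ ∧ q₄ ≠ q₁ ∧ q₄ ≠ q₂ := by
  obtain ⟨a, ha⟩ : S.Nonempty := card_pos.mp (by omega)
  obtain ⟨b, hb, hab⟩ : ∃ b ∈ S, f a ≠ f b := by
    by_contra! h
    have := hfiber a ha S subset_rfl fun b hb => (h b hb).symm
    omega
  set R := (S.erase a).erase b
  have hR : #R = n := by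
    rw [card_erase_of_mem (mem_erase.mpr ⟨(ne_of_apply_ne f hab).symm, hb⟩),
      card_erase_of_mem ha, hS]
    rfl
  have hRS : R ⊆ S := (erase_subset _ _).trans (erase_subset _ _)
  by_cases hsplit : ∃ c ∈ R, ∃ e ∈ R, f c ≠ f e
  · obtain ⟨c, hc, e, he, hce⟩ := hsplit
    simp only [R, mem_erase] at hc he
    exact ⟨a, ha, b, hb, c, hc.2.2, e, he.2.2, hab, hce, hc.2.1, hc.1, he.2.1, he.1⟩
  -- `R` is monochromatic, so it is a whole fiber and `a`, `b` lie outside it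
  push Not at hsplit
  obtain ⟨c, hc, e, he, hce⟩ := one_lt_card.mp (show 1 < #R by omega)
  have houtside : ∀ x ∈ S, x ∉ R → f x ≠ f c := by
    intro x hx hxR hxc
    have := hfiber c (hRS hc) (insert x R) (insert_subset hx hRS) (by
      simpa [hxc] using fun y hy => hsplit y hy c hc)
    rw [card_insert_of_notMem hxR] at this
    omega
  simp only [R, mem_erase] at hc he
  refine ⟨a, ha, c, hc.2.2, b, hb, e, he.2.2, houtside a ha (by simp [R]), ?_,
    (ne_of_apply_ne f hab).symm, hc.1.symm, he.2.1, hce.symm⟩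
  rw [hsplit e (by simp [R, he]) c (by simp [R, hc])]
  exact houtside b hb (by simp [R])

namespace MvPolynomial

variable {σ K : Type*} [Fintype σ]

noncomputable def ofLinearForm [CommSemiring K] (L : (σ → K) →ₗ[K] K) : MvPolynomial σ K :=
  ∑ i, C (L (Pi.basisFun K σ i)) * X i

theorem isHomogeneous_ofLinearForm [CommSemiring K] (L : (σ → K) →ₗ[K] K) :
    (ofLinearForm L).IsHomogeneous 1 :=
  IsHomogeneous.sum _ _ _ fun i _ => isHomogeneous_C_mul_X _ i

@[simp]
theorem eval_ofLinearForm [CommSemiring K] (L : (σ → K) →ₗ[K] K) (v : σ → K) :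
    eval v (ofLinearForm L) = L v := by
  conv_rhs => rw [← (Pi.basisFun K σ).sum_repr v]
  simp [ofLinearForm, mul_comm]

theorem exists_isHomogeneous_eval_ne_zero_of_linearForms [CommRing K] [IsDomain K]
    (𝓛 : Finset ((σ → K) →ₗ[K] K)) {v : σ → K} (hv : v ≠ 0) (h𝓛 : ∀ L ∈ 𝓛, L v ≠ 0)
    {m : ℕ} (hm : #𝓛 ≤ m) :
    ∃ F : MvPolynomial σ K, F.IsHomogeneous m ∧
      (∀ w, (∃ L ∈ 𝓛, L w = 0) → eval w F = 0) ∧ eval v F ≠ 0 := by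
  obtain ⟨i, hi⟩ := Function.ne_iff.mp hv
  refine ⟨(∏ L ∈ 𝓛, ofLinearForm L) * X i ^ (m - #𝓛), ?_, ?_, ?_⟩
  · convert (IsHomogeneous.prod 𝓛 _ (fun _ => 1) fun L _ => isHomogeneous_ofLinearForm L).mul
      ((isHomogeneous_X K i).pow (m - #𝓛)) using 1
    simp only [sum_const, smul_eq_mul, mul_one]
    omega
  · rintro w ⟨L, hL, hLw⟩
    simp only [map_mul, map_prod, eval_ofLinearForm]
    rw [prod_eq_zero hL hLw, zero_mul]
  · simp only [map_mul, map_prod, eval_ofLinearForm, map_pow, eval_X]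
    exact mul_ne_zero (prod_ne_zero_iff.mpr h𝓛) (pow_ne_zero _ hi)

end MvPolynomial

theorem Submodule.span_pair_eq_of_mem_span_pair {K V : Type*} [DivisionRing K] [AddCommGroup V]
    [Module K V] {x y z : V} (hxy : x ∉ K ∙ y) (hxz : x ∉ K ∙ z) (hx : x ∈ span K {y, z}) :
    span K {x, y} = span K {x, z} := by
  have hy : y ∈ span K {x, z} := mem_span_insert_exchange hx hxz
  have hz : z ∈ span K {x, y} :=
    mem_span_insert_exchange (by rwa [Set.pair_comm]) hxy
  apply le_antisymm <;> rw [span_le, Set.insert_subset_iff, Set.singleton_subset_iff]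
  exacts [⟨subset_span (by simp), hy⟩, ⟨subset_span (by simp), hz⟩]

namespace Projectivization

variable {K V : Type*} [Field K] [AddCommGroup V] [Module K V]

theorem rep_notMem_span_singleton_rep {p q : ℙ K V} (h : p ≠ q) : p.rep ∉ K ∙ q.rep := by
  rw [mem_span_singleton]
  rintro ⟨a, ha⟩
  exact h (by rw [← p.mk_rep, ← q.mk_rep, mk_eq_mk_iff']; exact ⟨a, ha⟩)

theorem rep_notMem_span_pair_rep {p q r : ℙ K V} (hq : p ≠ q) (hr : p ≠ r)
    (hqr : span K {p.rep, q.rep} ≠ span K {p.rep, r.rep}) :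
    p.rep ∉ span K {q.rep, r.rep} := fun h =>
  hqr (span_pair_eq_of_mem_span_pair (rep_notMem_span_singleton_rep hq)
    (rep_notMem_span_singleton_rep hr) h)

theorem exists_linearForms_cover_of_notMem {p : ℙ K V} (T : Finset (ℙ K V)) (hp : p ∉ T) :
    ∃ 𝓛 : Finset (V →ₗ[K] K), #𝓛 ≤ #T ∧ (∀ q ∈ T, ∃ L ∈ 𝓛, L q.rep = 0) ∧
      ∀ L ∈ 𝓛, L p.rep ≠ 0 := by
  classical
  induction T using Finset.induction_on with
  | empty => exact ⟨∅, by simp⟩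
  | insert q T hqT ih =>
    obtain ⟨𝓛, hcard, hcover, hp𝓛⟩ := ih (fun h => hp (mem_insert_of_mem h))
    obtain ⟨L, hLp, hLq⟩ := exists_le_ker_of_notMem
      (rep_notMem_span_singleton_rep (show p ≠ q by rintro rfl; exact hp (mem_insert_self p T)))
    refine ⟨insert L 𝓛, ?_, ?_, ?_⟩
    · rw [card_insert_of_notMem hqT]
      exact (card_insert_le _ _).trans (by omega)
    · simp only [mem_insert, forall_eq_or_imp, exists_eq_or_imp]
      exact ⟨Or.inl (hLq (mem_span_singleton_self _)), fun r hr => Or.inr (hcover r hr)⟩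
    · simpa using ⟨hLp, hp𝓛⟩

theorem span_pair_lt_top [FiniteDimensional K V] (hV : 2 < Module.finrank K V) (x y : V) :
    span K {x, y} < ⊤ := by
  classical
  refine lt_top_iff_ne_top.mpr fun h => ?_
  have := finrank_span_finset_le_card (R := K) ({x, y} : Finset V)
  rw [coe_pair, Set.finrank, h, finrank_top] at this
  have := card_le_two (a := x) (b := y)
  omega

theorem card_add_two_le_of_forall_span_pair_eq [FiniteDimensional K V]
    (hV : 2 < Module.finrank K V) {Γ : Finset (ℙ K V)} {d : ℕ}
    (hΓ : ∀ L : V →ₗ[K] K, L ≠ 0 → ∀ S ⊆ Γ, d ≤ #S → ∃ q ∈ S, L q.rep ≠ 0)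
    {p q : ℙ K V} (hp : p ∈ Γ) {T : Finset (ℙ K V)} (hT : T ⊆ Γ) (hpT : p ∉ T)
    (hTq : ∀ r ∈ T, span K {p.rep, r.rep} = span K {p.rep, q.rep}) : #T + 2 ≤ d := by
  classical
  obtain ⟨L, hL, hWL⟩ := (span K {p.rep, q.rep}).exists_le_ker_of_lt_top (span_pair_lt_top hV _ _)
  by_contra! hd
  obtain ⟨r, hr, hLr⟩ := hΓ L hL (insert p T) (insert_subset hp hT)
    (by rw [card_insert_of_notMem hpT]; omega)
  refine hLr (hWL ?_)
  rcases mem_insert.mp hr with rfl | hr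
  · exact subset_span (by simp)
  · exact hTq r hr ▸ subset_span (by simp)

theorem exists_linearForms_cover_of_pairs {p : ℙ K V} {S : Finset (ℙ K V)} (hp : p ∉ S)
    {q₁ q₂ q₃ q₄ : ℙ K V} (hq₁ : q₁ ∈ S) (hq₂ : q₂ ∈ S) (hq₃ : q₃ ∈ S) (hq₄ : q₄ ∈ S)
    (h₁₂ : span K {p.rep, q₁.rep} ≠ span K {p.rep, q₂.rep})
    (h₃₄ : span K {p.rep, q₃.rep} ≠ span K {p.rep, q₄.rep})
    (h₃₁ : q₃ ≠ q₁) (h₃₂ : q₃ ≠ q₂) (h₄₁ : q₄ ≠ q₁) (h₄₂ : q₄ ≠ q₂) :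
    ∃ 𝓛 : Finset (V →ₗ[K] K), #𝓛 + 2 ≤ #S ∧ (∀ q ∈ S, ∃ L ∈ 𝓛, L q.rep = 0) ∧
      ∀ L ∈ 𝓛, L p.rep ≠ 0 := by
  classical
  have hne : ∀ {q}, q ∈ S → p ≠ q := fun hq h => hp (h ▸ hq)
  obtain ⟨L₁, hL₁p, hL₁⟩ :=
    exists_le_ker_of_notMem (rep_notMem_span_pair_rep (hne hq₁) (hne hq₂) h₁₂)
  obtain ⟨L₂, hL₂p, hL₂⟩ :=
    exists_le_ker_of_notMem (rep_notMem_span_pair_rep (hne hq₃) (hne hq₄) h₃₄)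
  set Q : Finset (ℙ K V) := {q₁, q₂, q₃, q₄}
  obtain ⟨𝓛, hcard, hcover, hp𝓛⟩ :=
    exists_linearForms_cover_of_notMem (S \ Q) fun h => hp (mem_sdiff.mp h).1
  have hQ : #Q = 4 := by
    have h₂₁ : q₂ ≠ q₁ := fun h => h₁₂ (h ▸ rfl)
    have h₄₃ : q₄ ≠ q₃ := fun h => h₃₄ (h ▸ rfl)
    simp [Q, h₂₁.symm, h₃₁.symm, h₄₁.symm, h₃₂.symm, h₄₂.symm, h₄₃.symm]
  refine ⟨insert L₁ (insert L₂ 𝓛), ?_, fun q hq => ?_, by simpa using ⟨hL₁p, hL₂p, hp𝓛⟩⟩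
  · have hQS : Q ⊆ S := by simp [Q, insert_subset_iff, *]
    have := card_sdiff_of_subset hQS
    have := card_le_card hQS
    have := card_insert_le L₁ (insert L₂ 𝓛)
    have := card_insert_le L₂ 𝓛
    omega
  by_cases hqQ : q ∈ Q
  · simp only [Q, mem_insert, mem_singleton] at hqQ
    rcases hqQ with rfl | rfl | rfl | rfl
    exacts [⟨L₁, by simp, hL₁ (subset_span (by simp))⟩, ⟨L₁, by simp, hL₁ (subset_span (by simp))⟩,
      ⟨L₂, by simp, hL₂ (subset_span (by simp))⟩, ⟨L₂, by simp, hL₂ (subset_span (by simp))⟩]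
  · obtain ⟨L, hL, hLq⟩ := hcover q (mem_sdiff.mpr ⟨hq, hqQ⟩)
    exact ⟨L, by simp [hL], hLq⟩

end Projectivization

/-- If `d + 1 ≥ 5` distinct points in `ℙ²(ℂ)` fail to impose independent
linear conditions on plane curves of degree `d - 2`, then at least `d` of the points
are collinear. -/
theorem points_fail_independent_conditions_degree_sub_two_collinear
    (d : ℕ) (hd : 4 ≤ d)
    (Γ : Finset (Projectivization ℂ (Fin 3 → ℂ))) (hΓ : Γ.card = d + 1)
    (hfail : ∃ p ∈ Γ, ∀ F : MvPolynomial (Fin 3) ℂ, F.IsHomogeneous (d - 2) →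
      (∀ q ∈ Γ, q ≠ p → MvPolynomial.eval q.rep F = 0) →
      MvPolynomial.eval p.rep F = 0) :
    ∃ L : (Fin 3 → ℂ) →ₗ[ℂ] ℂ, L ≠ 0 ∧
      ∃ S : Finset (Projectivization ℂ (Fin 3 → ℂ)), S ⊆ Γ ∧ d ≤ S.card ∧
        ∀ q ∈ S, L q.rep = 0 := by
  classical
  by_contra! hcoll
  obtain ⟨p, hpΓ, hp⟩ := hfail
  have hS : #(Γ.erase p) = d - 2 + 2 := by rw [card_erase_of_mem hpΓ]; omega
  have hV : 2 < Module.finrank ℂ (Fin 3 → ℂ) := by simp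
  obtain ⟨q₁, hq₁, q₂, hq₂, q₃, hq₃, q₄, hq₄, h₁₂, h₃₄, h₃₁, h₃₂, h₄₁, h₄₂⟩ :=
    exists_two_disjoint_pairs_apply_ne (f := fun q => span ℂ {p.rep, q.rep}) (by omega) hS
      fun q _ T hT hTq => by
        have := Projectivization.card_add_two_le_of_forall_span_pair_eq hV hcoll hpΓ
          (hT.trans (erase_subset _ _)) (fun h => by simpa using hT h) hTq
        omega
  obtain ⟨𝓛, h𝓛, hcover, hp𝓛⟩ := Projectivization.exists_linearForms_cover_of_pairs
    (notMem_erase p Γ) hq₁ hq₂ hq₃ hq₄ h₁₂ h₃₄ h₃₁ h₃₂ h₄₁ h₄₂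
  obtain ⟨F, hF, hFS, hFp⟩ :=
    exists_isHomogeneous_eval_ne_zero_of_linearForms 𝓛 p.rep_nonzero hp𝓛 (m := d - 2) (by omega)
  exact hFp (hp F hF fun q hq hqp => hFS _ (hcover q (mem_erase.mpr ⟨hqp, hq⟩)))
end

section
/- Let ℓ ⊂ ℙ²(ℂ) be a projective line, let p₀ ∈ ℓ, let A be a finite nonempty subset of ℓ \ {p₀}, and let B be a finite nonempty subset of ℙ²(ℂ) disjoint from ℓ. Then there exists a homogeneous polynomial F of degree max(|A|, |B|) in ℂ[X₀, X₁, X₂], a product of linear forms, that vanishes at every point of A ∪ B but does not vanish at p₀. -/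
/-!
For `a ∈ A` and `b ∈ B`, the line through `a` and `b` meets `ℓ` only at `a`, since `b ∉ ℓ`; so it
misses `p₀`, and its equation is a linear form vanishing at `a` and `b` but not at `p₀`. Cover
`A` and `B` simultaneously by `max |A| |B|` pairs `(a, b)` and multiply the corresponding forms.
-/

open MvPolynomial
open scoped LinearAlgebra.Projectivization

theorem Finset.Nonempty.exists_fin_surjective_of_card_le {α : Type*} {s : Finset α}
    (hs : s.Nonempty) {n : ℕ} (h : s.card ≤ n) : ∃ f : Fin n → s, Function.Surjective f := by
  have : Nonempty s := hs.to_subtype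
  refine Function.exists_surjective_iff.mpr ⟨inferInstance, ?_⟩
  rw [Function.Embedding.nonempty_iff_card_le]
  simpa using h

theorem Module.exists_dual_eq_zero_eq_zero_ne_zero {K V : Type*} [Field K] [AddCommGroup V]
    [Module K V] {x y z : V} (h : z ∉ Submodule.span K {x, y}) :
    ∃ φ : Module.Dual K V, φ x = 0 ∧ φ y = 0 ∧ φ z ≠ 0 := by
  obtain ⟨φ, hφz, hφ⟩ := Submodule.exists_dual_map_eq_bot_of_notMem h inferInstance
  rw [← LinearMap.le_ker_iff_map] at hφ
  exact ⟨φ, hφ (Submodule.subset_span (by simp)), hφ (Submodule.subset_span (by simp)), hφz⟩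

theorem MvPolynomial.exists_isHomogeneous_one_eval_eq {σ R : Type*} [Fintype σ] [CommSemiring R]
    (φ : (σ → R) →ₗ[R] R) : ∃ P : MvPolynomial σ R, P.IsHomogeneous 1 ∧ ∀ v, eval v P = φ v := by
  classical
  refine ⟨Matrix.toMvPolynomial (Matrix.of fun (_ : Unit) j ↦ φ (Pi.single j 1)) (),
    Matrix.toMvPolynomial_isHomogeneous _ _, fun v ↦ ?_⟩
  conv_rhs => rw [pi_eq_sum_univ' v]
  simp [Matrix.toMvPolynomial_eval_eq_apply, Matrix.mulVec, dotProduct, mul_comm]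

namespace Projectivization

variable {K V W : Type*} [Field K] [AddCommGroup V] [Module K V] [AddCommGroup W] [Module K W]

theorem rep_notMem_span_pair {L : V →ₗ[K] W} {p a b : ℙ K V} (hp : L p.rep = 0)
    (ha : L a.rep = 0) (hap : a ≠ p) (hb : L b.rep ≠ 0) :
    p.rep ∉ Submodule.span K {a.rep, b.rep} := by
  rintro hspan
  obtain ⟨α, β, hαβ⟩ := Submodule.mem_span_pair.mp hspan
  have hβ : β = 0 := by simpa [hb, ha, hp] using congrArg L hαβ
  subst hβ
  rw [zero_smul, add_zero] at hαβ
  refine hap (Eq.symm ?_)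
  rw [← mk_rep a, ← mk_rep p, mk_eq_mk_iff']
  exact ⟨α, hαβ⟩

theorem exists_isHomogeneous_one_separating {σ : Type*} [Fintype σ] {L : (σ → K) →ₗ[K] W}
    {p a b : ℙ K (σ → K)} (hp : L p.rep = 0) (ha : L a.rep = 0) (hap : a ≠ p) (hb : L b.rep ≠ 0) :
    ∃ P : MvPolynomial σ K, P.IsHomogeneous 1 ∧
      eval a.rep P = 0 ∧ eval b.rep P = 0 ∧ eval p.rep P ≠ 0 := by
  obtain ⟨φ, hφa, hφb, hφp⟩ :=
    Module.exists_dual_eq_zero_eq_zero_ne_zero (rep_notMem_span_pair hp ha hap hb)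
  obtain ⟨P, hP, hPφ⟩ := exists_isHomogeneous_one_eval_eq φ
  exact ⟨P, hP, by rwa [hPφ], by rwa [hPφ], by rwa [hPφ]⟩

end Projectivization

theorem product_of_linear_forms_separating_point_on_line_general
    (L : (Fin 3 → ℂ) →ₗ[ℂ] ℂ)
    (p₀ : Projectivization ℂ (Fin 3 → ℂ)) (hp₀ : L p₀.rep = 0)
    (A B : Finset (Projectivization ℂ (Fin 3 → ℂ)))
    (hA : A.Nonempty) (hAline : ∀ p ∈ A, L p.rep = 0 ∧ p ≠ p₀)
    (hB : B.Nonempty) (hBline : ∀ p ∈ B, L p.rep ≠ 0) :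
    ∃ F : MvPolynomial (Fin 3) ℂ, F.IsHomogeneous (max A.card B.card) ∧
      (∃ G : Multiset (MvPolynomial (Fin 3) ℂ),
        (∀ g ∈ G, MvPolynomial.IsHomogeneous g 1) ∧ F = G.prod) ∧
      (∀ p, p ∈ A ∨ p ∈ B → MvPolynomial.eval p.rep F = 0) ∧
      MvPolynomial.eval p₀.rep F ≠ 0 := by
  obtain ⟨a, ha⟩ := hA.exists_fin_surjective_of_card_le (le_max_left A.card B.card)
  obtain ⟨b, hb⟩ := hB.exists_fin_surjective_of_card_le (le_max_right A.card B.card)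
  have hsep (i : Fin (max A.card B.card)) : ∃ P : MvPolynomial (Fin 3) ℂ, P.IsHomogeneous 1 ∧
      eval (a i).1.rep P = 0 ∧ eval (b i).1.rep P = 0 ∧ eval p₀.rep P ≠ 0 :=
    Projectivization.exists_isHomogeneous_one_separating hp₀ (hAline _ (a i).2).1
      (hAline _ (a i).2).2 (hBline _ (b i).2)
  choose P hP hPa hPb hP₀ using hsep
  refine ⟨∏ i, P i, ?_, ⟨Finset.univ.val.map P, by simpa using hP, rfl⟩, ?_, ?_⟩
  · simpa using IsHomogeneous.prod Finset.univ P (fun _ ↦ 1) fun i _ ↦ hP i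
  · rintro p (hp | hp)
    · obtain ⟨i, hi⟩ := ha ⟨p, hp⟩
      rw [map_prod]
      exact Finset.prod_eq_zero (Finset.mem_univ i) (by simpa [hi] using hPa i)
    · obtain ⟨i, hi⟩ := hb ⟨p, hp⟩
      rw [map_prod]
      exact Finset.prod_eq_zero (Finset.mem_univ i) (by simpa [hi] using hPb i)
  · rw [map_prod]
    exact Finset.prod_ne_zero_iff.mpr fun i _ ↦ hP₀ i

/-- Let `ℓ ⊂ ℙ²(ℂ)` be the projective line cut out by a nonzero linear
form `L`, let `p₀ ∈ ℓ`, let `A` be a finite nonempty subset of `ℓ \ {p₀}`, and let `B`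
be a finite nonempty set of points off `ℓ`. Then there is a homogeneous polynomial of
degree `max |A| |B|`, a product of linear forms, vanishing on `A ∪ B` but not at `p₀`. -/
theorem product_of_linear_forms_separating_point_on_line
    (L : (Fin 3 → ℂ) →ₗ[ℂ] ℂ) (hL : L ≠ 0)
    (p₀ : Projectivization ℂ (Fin 3 → ℂ)) (hp₀ : L p₀.rep = 0)
    (A B : Finset (Projectivization ℂ (Fin 3 → ℂ)))
    (hA : A.Nonempty) (hAline : ∀ p ∈ A, L p.rep = 0 ∧ p ≠ p₀)
    (hB : B.Nonempty) (hBline : ∀ p ∈ B, L p.rep ≠ 0) :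
    ∃ F : MvPolynomial (Fin 3) ℂ, F.IsHomogeneous (max A.card B.card) ∧
      (∃ G : Multiset (MvPolynomial (Fin 3) ℂ),
        (∀ g ∈ G, MvPolynomial.IsHomogeneous g 1) ∧ F = G.prod) ∧
      (∀ p, p ∈ A ∨ p ∈ B → MvPolynomial.eval p.rep F = 0) ∧
      MvPolynomial.eval p₀.rep F ≠ 0 :=
  product_of_linear_forms_separating_point_on_line_general L p₀ hp₀ A B hA hAline hB hBline
end
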